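/- (Property 2) Let C be an initial configuration of the BRP in which every stack is nonempty, and let 𝔅² be the top 1st layer of C. If the minimum label among the blocks of 𝔅² is strictly greater than the maximum over all stacks s of the minimum label occurring in stack s, then every feasible move sequence for C contains at least one BB relocation of a block of 𝔅²; that is, f_BB(𝔅²) ≥ 1. -/

import Mathlib

/-- A configuration of the BRP: each stack holds a list of blocks, bottom to top. -/
abbrev Config (B S : ℕ) := Fin S → List (Fin B)

/-- Every block occurs exactly once among the stacks. -/
def IsConfig {B S : ℕ} (C : Config B S) : Prop :=
  ∀ b : Fin B, (∑ s : Fin S, (C s).count b) = 1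

/-- `a` lies strictly below `b` in stack `s` of `C`. -/
def StrictlyBelow {B S : ℕ} (C : Config B S) (s : Fin S) (a b : Fin B) : Prop :=
  ∃ i j : ℕ, i < j ∧ (C s)[i]? = some a ∧ (C s)[j]? = some b

/-- A block is badly placed if some smaller-labelled block lies below it in its stack. -/
def BadlyPlaced {B S : ℕ} (C : Config B S) (b : Fin B) : Prop :=
  ∃ s a, a < b ∧ StrictlyBelow C s a b

/-- Moves: retrieve the top block of a stack, or relocate the top block of one
stack onto another stack. -/
inductive Move (S : ℕ) where
  | retrieve (s : Fin S)
  | relocate (src dst : Fin S)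

def applyMove {B S : ℕ} (C : Config B S) : Move S → Config B S
  | .retrieve s => Function.update C s (C s).dropLast
  | .relocate src dst =>
    match (C src).getLast? with
    | some b =>
      let C' := Function.update C src (C src).dropLast
      Function.update C' dst (C' dst ++ [b])
    | none => C

def Enabled {B S : ℕ} (C : Config B S) : Move S → Prop
  | .retrieve s => ∃ b, (C s).getLast? = some b ∧ ∀ (s' : Fin S), ∀ b' ∈ C s', b ≤ b'
  | .relocate src dst => src ≠ dst ∧ C src ≠ []

def play {B S : ℕ} (C : Config B S) : List (Move S) → Config B S
  | [] => C
  | m :: ms => play (applyMove C m) ms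

def AllEnabled {B S : ℕ} (C : Config B S) : List (Move S) → Prop
  | [] => True
  | m :: ms => Enabled C m ∧ AllEnabled (applyMove C m) ms

/-- A feasible move sequence: every move is enabled and at the end all blocks
have been retrieved. -/
def Feasible {B S : ℕ} (C : Config B S) (ms : List (Move S)) : Prop :=
  AllEnabled C ms ∧ ∀ s, play C ms s = []

/-- `b` is the block moved by `m` (a relocation) performed in configuration `C`. -/
def MovedBlock {B S : ℕ} (C : Config B S) (m : Move S) (b : Fin B) : Prop :=
  ∃ src dst, m = .relocate src dst ∧ src ≠ dst ∧ (C src).getLast? = some b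

/-- The four types of relocation moves. -/
inductive MType where
  | BB | BG | GB | GG

/-- The relocation `m`, moving block `b` from configuration `C`, has the given type. -/
def MTypeOf {B S : ℕ} (C : Config B S) (m : Move S) (b : Fin B) : MType → Prop
  | .BB => BadlyPlaced C b ∧ BadlyPlaced (applyMove C m) b
  | .BG => BadlyPlaced C b ∧ ¬ BadlyPlaced (applyMove C m) b
  | .GB => ¬ BadlyPlaced C b ∧ BadlyPlaced (applyMove C m) b
  | .GG => ¬ BadlyPlaced C b ∧ ¬ BadlyPlaced (applyMove C m) b

/-- `m` is a relocation of a block of `𝔅`. -/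
def RelocIn {B S : ℕ} (𝔅 : Set (Fin B)) (C : Config B S) (m : Move S) : Prop :=
  ∃ b ∈ 𝔅, MovedBlock C m b

/-- `m` is a relocation of a block of `𝔅` of type `mt`. -/
def RelocTypeIn {B S : ℕ} (mt : MType) (𝔅 : Set (Fin B)) (C : Config B S) (m : Move S) : Prop :=
  ∃ b ∈ 𝔅, MovedBlock C m b ∧ MTypeOf C m b mt

/-- `m` is a non-BG relocation of a block of `𝔅`. -/
def RelocNonBGIn {B S : ℕ} (𝔅 : Set (Fin B)) (C : Config B S) (m : Move S) : Prop :=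
  ∃ b ∈ 𝔅, MovedBlock C m b ∧ ¬ MTypeOf C m b MType.BG

/-- Count the moves of a sequence satisfying `P` (evaluated in the configuration
in which each move is performed). -/
noncomputable def countMoves {B S : ℕ} (P : Config B S → Move S → Prop) :
    Config B S → List (Move S) → ℕ
  | _, [] => 0
  | C, m :: ms =>
    (@ite ℕ (P C m) (Classical.propDecidable _) 1 0) + countMoves P (applyMove C m) ms

/-- Minimum over feasible move sequences of the number of moves satisfying `P`. -/
noncomputable def fMin {B S : ℕ} (C : Config B S) (P : Config B S → Move S → Prop) : ℕ :=
  sInf { n | ∃ ms, Feasible C ms ∧ countMoves P C ms = n }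

/-- `f(𝔅)`: least number of relocations applied to blocks of `𝔅`. -/
noncomputable def fRel {B S : ℕ} (C : Config B S) (𝔅 : Set (Fin B)) : ℕ :=
  fMin C (RelocIn 𝔅)

/-- `f_mt(𝔅)`: least number of type-`mt` relocations applied to blocks of `𝔅`. -/
noncomputable def fTyp {B S : ℕ} (C : Config B S) (mt : MType) (𝔅 : Set (Fin B)) : ℕ :=
  fMin C (RelocTypeIn mt 𝔅)

/-- `f_nonBG(𝔅)`: least number of non-BG relocations applied to blocks of `𝔅`. -/
noncomputable def fNonBG {B S : ℕ} (C : Config B S) (𝔅 : Set (Fin B)) : ℕ :=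
  fMin C (RelocNonBGIn 𝔅)

/-- The top 1st layer: the topmost block of each stack. -/
def TopLayer {B S : ℕ} (C : Config B S) : Set (Fin B) :=
  {b | ∃ s, (C s).getLast? = some b}

/-- The top `k` layers: the topmost `k` blocks of every stack. -/
def TopK {B S : ℕ} (C : Config B S) (k : ℕ) : Set (Fin B) :=
  {b | ∃ s, b ∈ (C s).drop ((C s).length - k)}

/-- The top `j`-th layer: the `j`-th block from the top of every stack. -/
def TopJth {B S : ℕ} (C : Config B S) (j : ℕ) : Set (Fin B) :=
  {b | ∃ s, (C s)[(C s).length - j]? = some b}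

/-- A virtual layer: a set of blocks containing exactly one block from each stack. -/
def VirtualLayer {B S : ℕ} (C : Config B S) (V : Set (Fin B)) : Prop :=
  ∀ s : Fin S, ∃! b : Fin B, b ∈ V ∧ b ∈ C s

/-- `a` lies at or below the `V`-block of stack `s`. -/
def AtOrBelowLayer {B S : ℕ} (C : Config B S) (V : Set (Fin B)) (s : Fin S) (a : Fin B) : Prop :=
  ∃ b j, b ∈ V ∧ (C s)[j]? = some b ∧ a ∈ (C s).take (j + 1)

/-- `V` is a virtual layer satisfying the conditions of Property 5:
(1) in some stack, a block strictly below the `V`-block of that stack has a smaller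
label than every block of `V`; (2) every badly placed block of `V` has a label
strictly greater than the minimum label present in stack `s` after deleting all
blocks strictly above the `V`-block of `s`, for every stack `s`. -/
def P5 {B S : ℕ} (C : Config B S) (V : Set (Fin B)) : Prop :=
  VirtualLayer C V ∧
  (∃ s a b, b ∈ V ∧ StrictlyBelow C s a b ∧ ∀ c ∈ V, a < c) ∧
  (∀ b ∈ V, BadlyPlaced C b → ∀ s : Fin S, ∃ a, AtOrBelowLayer C V s a ∧ a < b)

/-- A pair of virtual layers `V₁` (upper), `V₂` (lower) with shared well-placed
block `bstar` satisfying the conditions of Property 7. -/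
def P7 {B S : ℕ} (C : Config B S) (V₁ V₂ : Set (Fin B)) (bstar : Fin B) : Prop :=
  V₁ ∩ V₂ = {bstar} ∧
  ¬ BadlyPlaced C bstar ∧
  (∀ s : Fin S, bstar ∉ C s →
    ∃ b₁ b₂, b₁ ∈ V₁ ∧ b₂ ∈ V₂ ∧ StrictlyBelow C s b₂ b₁) ∧
  P5 C V₁ ∧ P5 C V₂ ∧
  (∀ s : Fin S, ∃ a, AtOrBelowLayer C V₁ s a ∧ a ≤ bstar) ∧
  (∃ s : Fin S, ∀ a, AtOrBelowLayer C V₁ s a → bstar ≤ a)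

/-- Push blocks one by one onto the indicated stacks. -/
def pushAll {B S : ℕ} (C : Config B S) : List (Fin B × Fin S) → Config B S
  | [] => C
  | p :: rest => pushAll (Function.update C p.2 (C p.2 ++ [p.1])) rest

/-- The blocks lying strictly above position `i` of stack `s`, listed from the
top of the stack downward (the processing order of the experiment). -/
def aboveList {B S : ℕ} (C : Config B S) (s : Fin S) (i : ℕ) : List (Fin B) :=
  ((C s).drop (i + 1)).reverse

/-- The arrangement resulting from the experiment of Property 4: the blocks above
position `i` of stack `s` are relocated exactly once, from the top downward, onto
the stacks listed in `ds`. -/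
def expResult {B S : ℕ} (C : Config B S) (s : Fin S) (i : ℕ) (ds : List (Fin S)) :
    Config B S :=
  pushAll (Function.update C s ((C s).take (i + 1))) ((aboveList C s i).zip ds)

/-- The condition of Property 4 (target block at position `i` of stack `sStar`):
in every experiment, some relocated block ends badly placed. -/
def P4Cond {B S : ℕ} (C : Config B S) (sStar : Fin S) (i : ℕ) : Prop :=
  ∀ ds : List (Fin S), ds.length = (aboveList C sStar i).length →
    (∀ d ∈ ds, d ≠ sStar) →
    ∃ b ∈ aboveList C sStar i, BadlyPlaced (expResult C sStar i ds) b

/-- The set `𝔅⁴`: the blocks above the target block together with, for each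
nonempty stack other than the target's stack, its block of minimum label. -/
def B4Set {B S : ℕ} (C : Config B S) (sStar : Fin S) (i : ℕ) : Set (Fin B) :=
  {b | b ∈ aboveList C sStar i} ∪
  {b | ∃ s, s ≠ sStar ∧ b ∈ C s ∧ ∀ b' ∈ C s, b ≤ b'}

/-- The number of direct blockages: adjacent pairs in a stack whose upper block
has a strictly larger label. -/
def directBlockages {B S : ℕ} (C : Config B S) : ℕ :=
  ∑ s : Fin S, (((C s).zip (C s).tail).filter (fun p => decide (p.1 < p.2))).length

/-- The number of relocations in a move sequence. -/
def relocCount {S : ℕ} (ms : List (Move S)) : ℕ :=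
  (ms.filter (fun m => match m with | Move.relocate _ _ => true | Move.retrieve _ => false)).length

/-- The minimum number of relocations over all feasible move sequences. -/
noncomputable def fAll {B S : ℕ} (C : Config B S) : ℕ :=
  sInf { n | ∃ ms, Feasible C ms ∧ relocCount ms = n }

/-- `g(L)`: `L` plus the minimum number of direct blockages over all partial
plans with exactly `L` relocations. -/
noncomputable def gIter {B S : ℕ} (C : Config B S) (L : ℕ) : ℕ :=
  L + sInf { d | ∃ ms : List (Move S), AllEnabled C ms ∧ relocCount ms = L ∧
      d = directBlockages (play C ms) }

/-! A retrieval must remove the globally smallest block, which the hypothesis puts strictly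
below the top of every stack, so every feasible sequence starts with a relocation of a top
block `b`; a smaller block lies below `b` both in its old and in its new stack, so that move
is BB. Since `f_BB` is an infimum over feasible sequences and `sInf ∅ = 0`, one also needs
a feasible sequence to exist: with two stacks, repeatedly dig out the smallest block by
moving what lies above it to another stack, then retrieve it. -/

open Function

variable {B S : ℕ}

section Moves

lemma applyMove_relocate_of_getLast? {C : Config B S} {src dst : Fin S} {b : Fin B}
    (h : (C src).getLast? = some b) :
    applyMove C (.relocate src dst) =
      update (update C src (C src).dropLast) dst (update C src (C src).dropLast dst ++ [b]) := by
  simp only [applyMove, h]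

lemma applyMove_relocate_dst {C : Config B S} {src dst : Fin S} {b : Fin B}
    (h : (C src).getLast? = some b) (hsd : src ≠ dst) :
    applyMove C (.relocate src dst) dst = C dst ++ [b] := by
  rw [applyMove_relocate_of_getLast? h, update_self, update_of_ne hsd.symm]

lemma applyMove_relocate_src {C : Config B S} {src dst : Fin S} {b : Fin B}
    (h : (C src).getLast? = some b) (hsd : src ≠ dst) :
    applyMove C (.relocate src dst) src = (C src).dropLast := by
  rw [applyMove_relocate_of_getLast? h, update_of_ne hsd, update_self]

lemma exists_mem_of_mem_applyMove {C : Config B S} {m : Move S} {s : Fin S} {b : Fin B}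
    (hb : b ∈ applyMove C m s) : ∃ s', b ∈ C s' := by
  cases m with
  | retrieve r =>
    simp only [applyMove, update_apply] at hb
    split_ifs at hb
    · exact ⟨r, List.dropLast_subset _ hb⟩
    · exact ⟨s, hb⟩
  | relocate src dst =>
    cases hlast : (C src).getLast? with
    | none => simp only [applyMove, hlast] at hb; exact ⟨s, hb⟩
    | some x =>
      rw [applyMove_relocate_of_getLast? hlast] at hb
      simp only [update_apply] at hb
      split_ifs at hb
      · rcases List.mem_append.mp hb with hb | hb
        · exact ⟨src, List.dropLast_subset _ hb⟩
        · exact ⟨src, List.mem_singleton.mp hb ▸ List.mem_of_getLast? hlast⟩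
      · rcases List.mem_append.mp hb with hb | hb
        · exact ⟨dst, hb⟩
        · exact ⟨src, List.mem_singleton.mp hb ▸ List.mem_of_getLast? hlast⟩
      · exact ⟨src, List.dropLast_subset _ hb⟩
      · exact ⟨s, hb⟩

lemma exists_mem_of_mem_play {C : Config B S} {ms : List (Move S)} {s : Fin S} {b : Fin B}
    (hb : b ∈ play C ms s) : ∃ s', b ∈ C s' := by
  induction ms generalizing C s with
  | nil => exact ⟨s, hb⟩
  | cons m ms ih =>
    obtain ⟨s', hs'⟩ := ih hb
    exact exists_mem_of_mem_applyMove hs'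

lemma play_append (C : Config B S) (ms ms' : List (Move S)) :
    play C (ms ++ ms') = play (play C ms) ms' := by
  induction ms generalizing C with
  | nil => rfl
  | cons m ms ih => exact ih _

lemma AllEnabled.append {C : Config B S} {ms ms' : List (Move S)} (h : AllEnabled C ms)
    (h' : AllEnabled (play C ms) ms') : AllEnabled C (ms ++ ms') := by
  induction ms generalizing C with
  | nil => exact h'
  | cons m ms ih => exact ⟨h.1, ih h.2 h'⟩

lemma Feasible.append {C : Config B S} {ms ms' : List (Move S)} (h : AllEnabled C ms)
    (h' : Feasible (play C ms) ms') : Feasible C (ms ++ ms') :=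
  ⟨h.append h'.1, by rw [play_append]; exact h'.2⟩

lemma Feasible.cons {C : Config B S} {m : Move S} {ms : List (Move S)} (hm : Enabled C m)
    (h : Feasible (applyMove C m) ms) : Feasible C (m :: ms) :=
  ⟨⟨hm, h.1⟩, h.2⟩

end Moves

section Existence

def totalBlocks (C : Config B S) : ℕ := ∑ s, (C s).length

lemma totalBlocks_update (C : Config B S) (s : Fin S) (l : List (Fin B)) :
    totalBlocks (update C s l) + (C s).length = totalBlocks C + l.length := by
  have h : ∀ x, (update C s l x).length = update (fun x => (C x).length) s l.length x :=
    fun x => apply_update (fun _ l => l.length) C s l x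
  simp only [totalBlocks, h]
  rw [Finset.sum_update_of_mem (Finset.mem_univ s),
    Finset.sum_eq_add_sum_sdiff_singleton_of_mem (Finset.mem_univ s) (fun x => (C x).length)]
  ring

lemma totalBlocks_applyMove_relocate {C : Config B S} {src dst : Fin S} {b : Fin B}
    (h : (C src).getLast? = some b) :
    totalBlocks (applyMove C (.relocate src dst)) = totalBlocks C := by
  have hpos : 0 < (C src).length :=
    List.length_pos_iff.mpr (List.ne_nil_of_mem (List.mem_of_getLast? h))
  have hdrop := totalBlocks_update C src (C src).dropLast
  have hpush := totalBlocks_update (update C src (C src).dropLast) dst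
    (update C src (C src).dropLast dst ++ [b])
  rw [applyMove_relocate_of_getLast? h]
  simp only [List.length_dropLast, List.length_append, List.length_singleton] at hdrop hpush
  omega

lemma totalBlocks_applyMove_retrieve {C : Config B S} {s : Fin S} (h : C s ≠ []) :
    totalBlocks (applyMove C (.retrieve s)) < totalBlocks C := by
  have hpos : 0 < (C s).length := List.length_pos_iff.mpr h
  have hdrop := totalBlocks_update C s (C s).dropLast
  rw [List.length_dropLast] at hdrop
  change totalBlocks (update C s (C s).dropLast) < totalBlocks C
  omega

lemma relocate_replicate {C : Config B S} {s t : Fin S} (hst : s ≠ t) {l u : List (Fin B)}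
    (hC : C s = l ++ u) :
    AllEnabled C (List.replicate u.length (.relocate s t)) ∧
      play C (List.replicate u.length (.relocate s t)) s = l ∧
      totalBlocks (play C (List.replicate u.length (.relocate s t))) = totalBlocks C := by
  induction u using List.reverseRecOn generalizing C with
  | nil => simpa [play, AllEnabled] using hC
  | append_singleton u x ih =>
    rw [← List.append_assoc] at hC
    have hlast : (C s).getLast? = some x := by rw [hC, List.getLast?_concat]
    have hsrc := applyMove_relocate_src hlast hst
    rw [hC, List.dropLast_concat] at hsrc
    obtain ⟨hen, hplay, htot⟩ := ih hsrc
    rw [List.length_append, List.length_singleton, List.replicate_succ]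
    exact ⟨⟨⟨hst, by simp [hC]⟩, hen⟩, hplay,
      htot.trans (totalBlocks_applyMove_relocate hlast)⟩

theorem exists_feasible (hS : 2 ≤ S) (C : Config B S) : ∃ ms, Feasible C ms := by
  have : Nontrivial (Fin S) := Fin.nontrivial_iff_two_le.mpr hS
  induction hn : totalBlocks C using Nat.strong_induction_on generalizing C with
  | _ n ih =>
  by_cases hempty : ∀ s, C s = []
  · exact ⟨[], trivial, hempty⟩
  push Not at hempty
  obtain ⟨s₀, hs₀⟩ := hempty
  obtain ⟨m, ⟨s, hms⟩, hmin⟩ := wellFounded_lt.has_min {b : Fin B | ∃ s, b ∈ C s}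
    ⟨_, s₀, (C s₀).getLast_mem hs₀⟩
  obtain ⟨l, u, hsplit⟩ := List.append_of_mem hms
  obtain ⟨t, hts⟩ := exists_ne s
  obtain ⟨hen, hplay, htot⟩ :=
    relocate_replicate hts.symm (show C s = (l ++ [m]) ++ u by simp [hsplit])
  have hret : Enabled (play C (List.replicate u.length (.relocate s t))) (.retrieve s) :=
    ⟨m, by simp [hplay], fun _ b hb => not_lt.mp (hmin b (exists_mem_of_mem_play hb))⟩
  have hlt : totalBlocks (applyMove (play C (List.replicate u.length (.relocate s t)))
      (.retrieve s)) < n := by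
    rw [← hn, ← htot]
    exact totalBlocks_applyMove_retrieve (by simp [hplay])
  obtain ⟨ms, hms⟩ := ih _ hlt _ rfl
  exact ⟨_, Feasible.append hen (Feasible.cons hret hms)⟩

end Existence

section TopLayer

lemma badlyPlaced_of_getLast? {C : Config B S} {s : Fin S} {a b : Fin B}
    (hb : (C s).getLast? = some b) (ha : a ∈ C s) (hab : a < b) : BadlyPlaced C b := by
  obtain ⟨i, hi⟩ := List.mem_iff_getElem?.mp ha
  have hlast : (C s)[(C s).length - 1]? = some b := by rwa [← List.getLast?_eq_getElem?]
  have hilt : i < (C s).length := (List.getElem?_eq_some_iff.mp hi).1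
  have hine : i ≠ (C s).length - 1 := by
    rintro rfl
    exact hab.ne (Option.some.inj (hi.symm.trans hlast))
  exact ⟨s, a, hab, i, _, by omega, hi, hlast⟩

variable {C : Config B S}

lemma not_enabled_retrieve_of_topLayer
    (hcond : ∀ b ∈ TopLayer C, ∀ s : Fin S, ∃ b' ∈ C s, b' < b)
    (s : Fin S) : ¬ Enabled C (.retrieve s) := by
  rintro ⟨b, hb, hmin⟩
  obtain ⟨b', hb', hlt⟩ := hcond b ⟨s, hb⟩ s
  exact (hmin s b' hb').not_gt hlt

lemma relocTypeIn_BB_topLayer_of_enabled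
    (hcond : ∀ b ∈ TopLayer C, ∀ s : Fin S, ∃ b' ∈ C s, b' < b) {src dst : Fin S}
    (hen : Enabled C (.relocate src dst)) :
    RelocTypeIn MType.BB (TopLayer C) C (.relocate src dst) := by
  obtain ⟨hsd, hsrc⟩ := hen
  obtain ⟨b, hb⟩ := Option.ne_none_iff_exists'.mp (mt List.getLast?_eq_none_iff.mp hsrc)
  have hbTop : b ∈ TopLayer C := ⟨src, hb⟩
  obtain ⟨a, ha, hab⟩ := hcond b hbTop src
  obtain ⟨a', ha', hab'⟩ := hcond b hbTop dst
  refine ⟨b, hbTop, ⟨src, dst, rfl, hsd, hb⟩, badlyPlaced_of_getLast? hb ha hab, ?_⟩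
  have hdst := applyMove_relocate_dst hb hsd (dst := dst)
  exact badlyPlaced_of_getLast? (s := dst) (by rw [hdst]; simp) (by rw [hdst]; simp [ha']) hab'

lemma one_le_countMoves_BB_topLayer [NeZero S]
    (hcond : ∀ b ∈ TopLayer C, ∀ s : Fin S, ∃ b' ∈ C s, b' < b)
    (hne : ∀ s, C s ≠ []) {ms : List (Move S)} (hms : Feasible C ms) :
    1 ≤ countMoves (RelocTypeIn MType.BB (TopLayer C)) C ms := by
  obtain ⟨hen, hend⟩ := hms
  match ms, hen, hend with
  | [], _, hend => exact absurd (hend 0) (hne 0)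
  | .retrieve s :: _, hen, _ => exact absurd hen.1 (not_enabled_retrieve_of_topLayer hcond s)
  | .relocate src dst :: _, hen, _ =>
    rw [countMoves, if_pos (relocTypeIn_BB_topLayer_of_enabled hcond hen.1)]
    exact Nat.le_add_right 1 _

end TopLayer

theorem brp_property2_general {B S : ℕ} (hS : 2 ≤ S)
    (C : Config B S) (hne : ∀ s, C s ≠ [])
    (hcond : ∀ b ∈ TopLayer C, ∀ s : Fin S, ∃ b' ∈ C s, b' < b) :
    (∀ ms, Feasible C ms → 1 ≤ countMoves (RelocTypeIn MType.BB (TopLayer C)) C ms) ∧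
    1 ≤ fTyp C MType.BB (TopLayer C) := by
  have : NeZero S := ⟨by omega⟩
  have hBB : ∀ ms, Feasible C ms → 1 ≤ countMoves (RelocTypeIn MType.BB (TopLayer C)) C ms :=
    fun _ => one_le_countMoves_BB_topLayer hcond hne
  refine ⟨hBB, le_csInf ?_ ?_⟩
  · obtain ⟨ms, hms⟩ := exists_feasible hS C
    exact ⟨_, ms, hms, rfl⟩
  · rintro n ⟨ms, hms, rfl⟩
    exact hBB ms hms

/-- Property 2: if every stack is nonempty and the minimum label of
the top 1st layer `𝔅²` is strictly greater than the maximum over the stacks of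
the minimum label in the stack (equivalently, every block of `𝔅²` has, in every
stack, some block of smaller label), then every feasible move sequence contains
at least one BB relocation of a block of `𝔅²`; that is, `f_BB(𝔅²) ≥ 1`. -/
theorem brp_property2 {B S : ℕ} (hS : 2 ≤ S) (hB : 1 ≤ B)
    (C : Config B S) (hC : IsConfig C) (hne : ∀ s, C s ≠ [])
    (hcond : ∀ b ∈ TopLayer C, ∀ s : Fin S, ∃ b' ∈ C s, b' < b) :
    (∀ ms, Feasible C ms → 1 ≤ countMoves (RelocTypeIn MType.BB (TopLayer C)) C ms) ∧
    1 ≤ fTyp C MType.BB (TopLayer C) :=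
  brp_property2_general hS C hne hcond
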